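/- With Q_t f the Hopf-Lax semigroup on a metric space, the functions D⁺ and D⁻ satisfy D⁺(x,t) ≤ D⁻(x,s) for all 0 < t < s < t_*(x); consequently t ↦ D⁺(x,t) and t ↦ D⁻(x,t) are nondecreasing on (0, t_*(x)) and coincide except for at most countably many t. -/

import Mathlib

open Filter Topology

/-- `F(t,x,y) = f(y) + d(x,y)²/(2t)`. -/
noncomputable def hopfLaxF {X : Type*} [MetricSpace X] (f : X → ℝ) (t : ℝ) (x y : X) : ℝ :=
  f y + dist x y ^ 2 / (2 * t)

/-- `(y n)` is a minimizing sequence for `F(t,x,·)`, whose infimum value is `Q`. -/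
def IsMinimizingSeq {X : Type*} [MetricSpace X] (f : X → ℝ) (t : ℝ) (x : X) (Q : ℝ)
    (y : ℕ → X) : Prop :=
  Tendsto (fun n => hopfLaxF f t x (y n)) atTop (𝓝 Q)

/-!
If `t < s`, then `F(t,x,·) - F(s,x,·) = c d(x,·)²` with `c = 1/(2t) - 1/(2s) > 0`. Comparing a
near-minimizer `w` at time `t` with a near-minimizer `v` at time `s` gives
`c (d(x,w)² - d(x,v)²) ≤ (F(t,x,w) - Q_t) + (F(s,x,v) - Q_s)`, so along minimizing sequences every
limit point of `d(x,w)` is at most every limit point of `d(x,v)`: `D⁺(x,t) ≤ D⁻(x,s)`.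
Together with `D⁻ ≤ D⁺` this makes `D⁺` and `D⁻` nondecreasing, and the nonempty intervals
`(D⁻(x,t), D⁺(x,t))` are pairwise disjoint, hence countably many. Minimizing sequences at
`t < t_*(x)` are bounded, since for `u ∈ (t, t_*(x))` the difference `F(t,x,·) - F(u,x,·)` is a
positive multiple of `d(x,·)²` and `F(u,x,·)` is bounded below; this keeps their `liminf` and
`limsup` meaningful.
-/

section Interleaved

variable {α : Type*} [LinearOrder α] {S : Set α} {g h : α → ℝ}

theorem monotoneOn_of_interleaved_left (hgh : ∀ t ∈ S, g t ≤ h t)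
    (hhg : ∀ t ∈ S, ∀ s ∈ S, t < s → h t ≤ g s) : MonotoneOn g S := by
  intro t ht s hs hts
  rcases hts.eq_or_lt with rfl | hlt
  · exact le_rfl
  · exact (hgh t ht).trans (hhg t ht s hs hlt)

theorem monotoneOn_of_interleaved_right (hgh : ∀ t ∈ S, g t ≤ h t)
    (hhg : ∀ t ∈ S, ∀ s ∈ S, t < s → h t ≤ g s) : MonotoneOn h S := by
  intro t ht s hs hts
  rcases hts.eq_or_lt with rfl | hlt
  · exact le_rfl
  · exact (hhg t ht s hs hlt).trans (hgh s hs)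

theorem countable_ne_of_interleaved (hgh : ∀ t ∈ S, g t ≤ h t)
    (hhg : ∀ t ∈ S, ∀ s ∈ S, t < s → h t ≤ g s) : {t ∈ S | h t ≠ g t}.Countable := by
  have hdisj : Set.PairwiseDisjoint {t ∈ S | h t ≠ g t} fun t => Set.Ioo (g t) (h t) := by
    intro t ht s hs hne
    wlog hlt : t < s generalizing t s
    · exact (this hs ht hne.symm (hne.lt_or_gt.resolve_left hlt)).symm
    exact Set.disjoint_left.mpr fun u hut hus =>
      lt_irrefl u ((hut.2.trans_le (hhg t ht.1 s hs.1 hlt)).trans hus.1)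
  refine hdisj.countable_of_isOpen (fun _ _ => isOpen_Ioo) ?_
  rintro t ⟨ht, hne⟩
  exact Set.nonempty_Ioo.mpr ((hgh t ht).lt_of_ne hne.symm)

end Interleaved

theorem limsup_le_liminf_of_le_add {ι κ : Type*} {l : Filter ι} {l' : Filter κ}
    {a r : ι → ℝ} {b s : κ → ℝ} (hr : Tendsto r l (𝓝 0)) (hs : Tendsto s l' (𝓝 0))
    (hab : ∀ i j, a i ≤ b j + r i + s j)
    (ha : IsCoboundedUnder (· ≤ ·) l a) (hb : IsCoboundedUnder (· ≥ ·) l' b) :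
    l.limsup a ≤ l'.liminf b := by
  refine le_of_forall_pos_le_add fun ε hε => ?_
  obtain ⟨j, hbj, hsj⟩ :=
    ((frequently_lt_of_liminf_lt hb (lt_add_of_pos_right _ (half_pos hε))).and_eventually
      (hs.eventually (gt_mem_nhds (by positivity : (0 : ℝ) < ε / 4)))).exists
  refine limsup_le_of_le ha ?_
  filter_upwards [hr.eventually (gt_mem_nhds (by positivity : (0 : ℝ) < ε / 4))] with i hri
  linarith [hab i j]

theorem le_add_sqrt_add_sqrt_of_sq_le_sq_add {a b ρ σ : ℝ} (hb : 0 ≤ b) (hρ : 0 ≤ ρ)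
    (hσ : 0 ≤ σ) (h : a ^ 2 ≤ b ^ 2 + ρ + σ) : a ≤ b + √ρ + √σ := by
  have hρ' := Real.sq_sqrt hρ
  have hσ' := Real.sq_sqrt hσ
  have h' : a ^ 2 ≤ (b + √ρ + √σ) ^ 2 := by
    nlinarith [Real.sqrt_nonneg ρ, Real.sqrt_nonneg σ]
  exact le_of_sq_le_sq h' (by positivity)

section HopfLax

variable {X : Type*} [MetricSpace X] {f : X → ℝ} {x : X} {t s : ℝ}

theorem hopfLaxF_sub_hopfLaxF (ht : t ≠ 0) (hs : s ≠ 0) (w : X) :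
    hopfLaxF f t x w - hopfLaxF f s x w = (1 / (2 * t) - 1 / (2 * s)) * dist x w ^ 2 := by
  unfold hopfLaxF
  field_simp
  ring

theorem one_div_two_mul_sub_one_div_two_mul_pos (ht : 0 < t) (hts : t < s) : 0 < 1 / (2 * t) - 1 / (2 * s) :=
  sub_pos.mpr (one_div_lt_one_div_of_lt (by positivity) (by linarith))

theorem IsMinimizingSeq.isBoundedUnder_dist {Qt Qs : ℝ} {y : ℕ → X}
    (hy : IsMinimizingSeq f t x Qt y) (ht : 0 < t) (hts : t < s)
    (hQs : Qs ∈ lowerBounds (Set.range (hopfLaxF f s x))) :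
    IsBoundedUnder (· ≤ ·) atTop fun n => dist x (y n) := by
  set c := 1 / (2 * t) - 1 / (2 * s)
  have hc : 0 < c := one_div_two_mul_sub_one_div_two_mul_pos ht hts
  refine isBoundedUnder_of_eventually_le (a := 1 + (Qt + 1 - Qs) / c) ?_
  filter_upwards [hy.eventually (gt_mem_nhds (lt_add_one Qt))] with n hn
  have hsub := hopfLaxF_sub_hopfLaxF (f := f) (x := x) ht.ne' (ht.trans hts).ne' (y n)
  have hsq : dist x (y n) ^ 2 ≤ (Qt + 1 - Qs) / c := by
    rw [le_div_iff₀ hc]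
    linarith [hQs ⟨y n, rfl⟩]
  nlinarith [sq_nonneg (dist x (y n) - 1)]

theorem dist_sq_le_dist_sq_add_excess {Qt Qs : ℝ} (ht : 0 < t) (hts : t < s)
    (hQt : Qt ∈ lowerBounds (Set.range (hopfLaxF f t x)))
    (hQs : Qs ∈ lowerBounds (Set.range (hopfLaxF f s x))) (w v : X) :
    dist x w ^ 2 ≤ dist x v ^ 2 + (hopfLaxF f t x w - Qt) / (1 / (2 * t) - 1 / (2 * s))
      + (hopfLaxF f s x v - Qs) / (1 / (2 * t) - 1 / (2 * s)) := by
  have hc := one_div_two_mul_sub_one_div_two_mul_pos ht hts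
  have hw := hopfLaxF_sub_hopfLaxF (f := f) (x := x) ht.ne' (ht.trans hts).ne' w
  have hv := hopfLaxF_sub_hopfLaxF (f := f) (x := x) ht.ne' (ht.trans hts).ne' v
  rw [add_assoc, ← add_div, ← sub_le_iff_le_add', le_div_iff₀ hc]
  linarith [hQt ⟨v, rfl⟩, hQs ⟨w, rfl⟩]

theorem limsup_dist_le_liminf_dist {Qt Qs : ℝ} {y z : ℕ → X} (ht : 0 < t) (hts : t < s)
    (hQt : Qt ∈ lowerBounds (Set.range (hopfLaxF f t x)))
    (hQs : Qs ∈ lowerBounds (Set.range (hopfLaxF f s x)))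
    (hy : IsMinimizingSeq f t x Qt y) (hz : IsMinimizingSeq f s x Qs z)
    (hz_bdd : IsBoundedUnder (· ≤ ·) atTop fun n => dist x (z n)) :
    atTop.limsup (fun n => dist x (y n)) ≤ atTop.liminf fun n => dist x (z n) := by
  set c := 1 / (2 * t) - 1 / (2 * s)
  have hc : 0 < c := one_div_two_mul_sub_one_div_two_mul_pos ht hts
  have hexcess : ∀ {τ Q} {w : ℕ → X}, IsMinimizingSeq f τ x Q w →
      Tendsto (fun n => √((hopfLaxF f τ x (w n) - Q) / c)) atTop (𝓝 0) := fun {_ Q _} hw => by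
    simpa using ((hw.sub_const Q).div_const c).sqrt
  refine limsup_le_liminf_of_le_add (hexcess hy) (hexcess hz) (fun n m => ?_)
    (isBoundedUnder_of ⟨0, fun _ => dist_nonneg⟩).isCoboundedUnder_le
    hz_bdd.isCoboundedUnder_ge
  refine le_add_sqrt_add_sqrt_of_sq_le_sq_add dist_nonneg ?_ ?_
    (dist_sq_le_dist_sq_add_excess ht hts hQt hQs (y n) (z m))
  · exact div_nonneg (sub_nonneg.mpr (hQt ⟨y n, rfl⟩)) hc.le
  · exact div_nonneg (sub_nonneg.mpr (hQs ⟨z m, rfl⟩)) hc.le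

end HopfLax

/-- `T` stands for `t_*(x)`, encoded by requiring `Q t x` to be a real greatest lower bound of
`F(t,x,·)` for every `t ∈ (0,T)`. -/
theorem hopfLax_D_monotone {X : Type*} [MetricSpace X] (f : X → ℝ)
    (Q : ℝ → X → ℝ) (x : X) (T : ℝ)
    (hQ : ∀ t ∈ Set.Ioo (0 : ℝ) T, IsGLB (Set.range (hopfLaxF f t x)) (Q t x))
    (Dp Dm : ℝ → ℝ)
    (hDp : ∀ t ∈ Set.Ioo (0 : ℝ) T, IsLUB {L : ℝ | ∃ y : ℕ → X,
      IsMinimizingSeq f t x (Q t x) y ∧ L = atTop.limsup fun n => dist x (y n)} (Dp t))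
    (hDm : ∀ t ∈ Set.Ioo (0 : ℝ) T, IsGLB {L : ℝ | ∃ y : ℕ → X,
      IsMinimizingSeq f t x (Q t x) y ∧ L = atTop.liminf fun n => dist x (y n)} (Dm t)) :
    (∀ t ∈ Set.Ioo (0 : ℝ) T, ∀ s ∈ Set.Ioo (0 : ℝ) T, t < s → Dp t ≤ Dm s) ∧
    MonotoneOn Dp (Set.Ioo (0 : ℝ) T) ∧ MonotoneOn Dm (Set.Ioo (0 : ℝ) T) ∧
    Set.Countable {t ∈ Set.Ioo (0 : ℝ) T | Dp t ≠ Dm t} := by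
  have hbdd : ∀ t ∈ Set.Ioo (0 : ℝ) T, ∀ {y : ℕ → X}, IsMinimizingSeq f t x (Q t x) y →
      IsBoundedUnder (· ≤ ·) atTop fun n => dist x (y n) := fun t ht _ hy =>
    hy.isBoundedUnder_dist ht.1 (by linarith [ht.2])
      (hQ ((t + T) / 2) ⟨by linarith [ht.1, ht.2], by linarith [ht.2]⟩).1
  have hDp_le_Dm : ∀ t ∈ Set.Ioo (0 : ℝ) T, ∀ s ∈ Set.Ioo (0 : ℝ) T, t < s → Dp t ≤ Dm s := by
    intro t ht s hs hts
    refine (hDp t ht).2 ?_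
    rintro _ ⟨y, hy, rfl⟩
    refine (hDm s hs).2 ?_
    rintro _ ⟨z, hz, rfl⟩
    exact limsup_dist_le_liminf_dist ht.1 hts (hQ t ht).1 (hQ s hs).1 hy hz (hbdd s hs hz)
  have hDm_le_Dp : ∀ t ∈ Set.Ioo (0 : ℝ) T, Dm t ≤ Dp t := by
    intro t ht
    obtain ⟨_, y, hy, rfl⟩ := (hDp t ht).nonempty
    calc Dm t ≤ atTop.liminf fun n => dist x (y n) := (hDm t ht).1 ⟨y, hy, rfl⟩
      _ ≤ atTop.limsup fun n => dist x (y n) :=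
        liminf_le_limsup (hbdd t ht hy) (isBoundedUnder_of ⟨0, fun _ => dist_nonneg⟩)
      _ ≤ Dp t := (hDp t ht).1 ⟨y, hy, rfl⟩
  exact ⟨hDp_le_Dm, monotoneOn_of_interleaved_right hDm_le_Dp hDp_le_Dm,
    monotoneOn_of_interleaved_left hDm_le_Dp hDp_le_Dm,
    countable_ne_of_interleaved hDm_le_Dp hDp_le_Dm⟩
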